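/- If (p_k)_{k=0}^{N(d−1)} is a geometric sequence, i.e. p_k = t^k for some t > 0, then the diagonal restricted Dicke state ρ = Σ_{k=0}^{N(d−1)} t^k |R_{N,d;k}⟩⟨R_{N,d;k}| is fully separable. -/

import Mathlib

open scoped BigOperators ComplexConjugate ComplexOrder Matrix
noncomputable section
open MeasureTheory

namespace DSym

/-- Index set of the computational basis of `(ℂ^d)^{⊗N}`. -/
abbrev Idx (d N : ℕ) := Fin N → Fin d

/-- `|i| = i_1 + ⋯ + i_N`. -/
def wsum {d N : ℕ} (i : Idx d N) : ℕ := ∑ j, (i j : ℕ)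

/-- `C(N,k)_d = #{i ∈ {0,…,d−1}^N : |i| = k}`. -/
def Ccount (d N k : ℕ) : ℕ := (Finset.univ.filter (fun i : Idx d N => wsum i = k)).card

/-- The D-symmetrizator `P_D`. -/
def PD (d N : ℕ) : Matrix (Idx d N) (Idx d N) ℂ :=
  Matrix.of fun i j => if wsum i = wsum j then ((Ccount d N (wsum j) : ℂ))⁻¹ else 0

/-- The symmetrizator `P_S`. -/
def PS (d N : ℕ) : Matrix (Idx d N) (Idx d N) ℂ :=
  Matrix.of fun i j =>
    ((N.factorial : ℂ))⁻¹ *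
      ((Finset.univ.filter (fun σ : Equiv.Perm (Fin N) => i = fun k => j (σ k))).card : ℂ)

/-- The product state `|ξ^1⟩⟨ξ^1| ⊗ ⋯ ⊗ |ξ^N⟩⟨ξ^N|` as a matrix. -/
def prodProj {d N : ℕ} (ξ : Fin N → (Fin d → ℂ)) : Matrix (Idx d N) (Idx d N) ℂ :=
  Matrix.of fun i i' => ∏ j, ξ j (i j) * conj (ξ j (i' j))

/-- Full separability of a multipartite state. -/
def FullySep {d N : ℕ} (ρ : Matrix (Idx d N) (Idx d N) ℂ) : Prop :=
  ∃ (n : ℕ) (lam : Fin n → ℝ) (ξ : Fin n → Fin N → (Fin d → ℂ)),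
    (∀ α, 0 < lam α) ∧ (∀ α j, ∑ x, Complex.normSq (ξ α j x) = 1) ∧
      ρ = ∑ α, (lam α : ℂ) • prodProj (ξ α)

/-- The restricted Dicke vector `|R_{N,d;k}⟩`. -/
def Rvec (d N k : ℕ) : Idx d N → ℂ := fun i => if wsum i = k then 1 else 0

/-- The rank-one operator `|R_{N,d;k}⟩⟨R_{N,d;k}|`. -/
def RProj (d N k : ℕ) : Matrix (Idx d N) (Idx d N) ℂ :=
  Matrix.vecMulVec (Rvec d N k) (star (Rvec d N k))

/-- Diagonal restricted Dicke state with coefficients `p`. -/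
def dickeDiag (d N : ℕ) (p : ℕ → ℝ) : Matrix (Idx d N) (Idx d N) ℂ :=
  ∑ k ∈ Finset.range (N * (d - 1) + 1), (p k : ℂ) • RProj d N k

/-- Partial transposition of the first `m` tensor factors (entrywise). -/
def Gamma {d N : ℕ} (m : ℕ) (ρ : Matrix (Idx d N) (Idx d N) ℂ) :
    Matrix (Idx d N) (Idx d N) ℂ :=
  Matrix.of fun i j =>
    ρ (fun k => if (k : ℕ) < m then j k else i k) (fun k => if (k : ℕ) < m then i k else j k)

/-- D-symmetry of a state: `ρ = P_D ρ P_D`. -/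
def IsDSymm {d N : ℕ} (ρ : Matrix (Idx d N) (Idx d N) ℂ) : Prop :=
  ρ = PD d N * ρ * PD d N

/-- A pure fully separable D-symmetric state `σ = (|ξ⟩⟨ξ|)^{⊗N}`, `ξ` a unit vector. -/
def PureDSymmProd {d N : ℕ} (σ : Matrix (Idx d N) (Idx d N) ℂ) : Prop :=
  ∃ ξ : Fin d → ℂ,
    (∑ x, Complex.normSq (ξ x) = 1) ∧ σ = prodProj (fun _ : Fin N => ξ) ∧ IsDSymm σ

/-- Entanglement witness for the D-symmetric system. -/
def IsDWitness {d N : ℕ} (W : Matrix (Idx d N) (Idx d N) ℂ) : Prop :=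
  W.IsHermitian ∧ W = PD d N * W * PD d N ∧
    ∀ σ : Matrix (Idx d N) (Idx d N) ℂ, PureDSymmProd σ → 0 ≤ (W * σ).trace

/-- The dual restricted Dicke vector. -/
def Rtilde (d N k : ℕ) : Idx d N → ℂ := ((Ccount d N k : ℂ))⁻¹ • Rvec d N k

/-- Solution of the generalized moment problem on `[0,∞)`. -/
def IsGenMomentSolution (n : ℕ) (p : ℕ → ℝ) : Prop :=
  ∃ (σ : Measure ℝ) (M : ℝ), IsFiniteMeasure σ ∧ σ {x | x < 0} = 0 ∧
    (∀ k ≤ n, Integrable (fun t => t ^ k) σ) ∧ 0 ≤ M ∧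
    (∀ k < n, p k = ∫ t, t ^ k ∂σ) ∧ p n = (∫ t, t ^ n ∂σ) + M

/-- Solution of the strict moment problem on `[0,∞)`. -/
def IsStrictMomentSolution (n : ℕ) (p : ℕ → ℝ) : Prop :=
  ∃ σ : Measure ℝ, IsFiniteMeasure σ ∧ σ {x | x < 0} = 0 ∧
    (∀ k ≤ n, Integrable (fun t => t ^ k) σ) ∧ (∀ k ≤ n, p k = ∫ t, t ^ k ∂σ)


/-- The normalization constant `C_z = (Σ_{i=0}^{d−1} |z|^{2i})^{−1/2}`. -/
def Cz (d : ℕ) (z : ℂ) : ℝ := (∑ j ∈ Finset.range d, ‖z‖ ^ (2 * j)) ^ (-(1/2 : ℝ))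

/-- The vector `ζ_z = C_z Σ_{i=0}^{d−1} z^i |i⟩`. -/
def zeta (d : ℕ) (z : ℂ) : Fin d → ℂ := fun i => (Cz d z : ℂ) * z ^ (i : ℕ)

/-- The basis vector `|d−1⟩`. -/
def topVec (d : ℕ) : Fin d → ℂ := fun x => if (x : ℕ) = d - 1 then 1 else 0

/-- Sum of the first `m` coordinates of a tuple. -/
def wsumFirst {d N : ℕ} (m : ℕ) (i : Idx d N) : ℕ :=
  ∑ j ∈ Finset.univ.filter (fun j : Fin N => (j : ℕ) < m), (i j : ℕ)

/-- Sum of the last `N − m` coordinates of a tuple. -/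
def wsumLast {d N : ℕ} (m : ℕ) (i : Idx d N) : ℕ :=
  ∑ j ∈ Finset.univ.filter (fun j : Fin N => m ≤ (j : ℕ)), (i j : ℕ)

/-- The vector `|R_{m,d;a}⟩ ⊗ |R_{N−m,d;b}⟩`, viewed inside `(ℂ^d)^{⊗N}`. -/
def splitVec (d N m : ℕ) (a b : ℤ) : Idx d N → ℂ :=
  fun i => if (wsumFirst m i : ℤ) = a ∧ (wsumLast m i : ℤ) = b then 1 else 0

/-- The operator `A_s` from the decomposition of `Γ_m(ρ)`. -/
def Amat (d N m : ℕ) (p : ℕ → ℝ) (s : ℤ) : Matrix (Idx d N) (Idx d N) ℂ :=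
  ∑ k ∈ Finset.Icc (max 0 (-s)) (min ((m : ℤ) * ((d : ℤ) - 1)) ((((N : ℤ) - (m : ℤ)) * ((d : ℤ) - 1)) - s)),
  ∑ l ∈ Finset.Icc (max 0 (-s)) (min ((m : ℤ) * ((d : ℤ) - 1)) ((((N : ℤ) - (m : ℤ)) * ((d : ℤ) - 1)) - s)),
    (p (k + l + s).toNat : ℂ) •
      Matrix.vecMulVec (splitVec d N m k (k + s)) (star (splitVec d N m l (l + s)))

/-- The permutation unitary `F_σ`, `F_σ|ξ_1,…,ξ_N⟩ = |ξ_{σ⁻¹(1)},…,ξ_{σ⁻¹(N)}⟩`. -/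
def Fmat (d N : ℕ) (σ : Equiv.Perm (Fin N)) : Matrix (Idx d N) (Idx d N) ℂ :=
  Matrix.of fun x i => if x = fun k => i (σ.symm k) then 1 else 0

/-- Partial transposition with respect to the binary string `b`. -/
def partialT {d N : ℕ} (b : Fin N → Bool) (ρ : Matrix (Idx d N) (Idx d N) ℂ) :
    Matrix (Idx d N) (Idx d N) ℂ :=
  Matrix.of fun i j => ρ (fun k => if b k then j k else i k) (fun k => if b k then i k else j k)

end DSym
end


/-!
Averaging the product states `ζ_w^{⊗N}` over the rotated points `w = z ω^α`, where `ω` is a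
primitive `M`-th root of unity and `M > N(d−1)`, multiplies the entry `⟨i|·|i'⟩` by
`∑_α ω^{α(|i|−|i'|)}`, which vanishes unless `|i| = |i'|` because `| |i| − |i'| | < M`.
What survives is `|z|^{2|i|}` on the blocks `|i| = |i'|`, i.e. the diagonal restricted Dicke state
with `p_k = |z|^{2k}`; taking `z = √t` gives `p_k = t^k`.
-/

open Finset

lemma IsPrimitiveRoot.sum_pow_mul_conj_pow {ω : ℂ} {M : ℕ} (hω : IsPrimitiveRoot ω M)
    {a b : ℕ} (ha : a < M) (hb : b < M) :
    ∑ α ∈ range M, (ω ^ a * conj ω ^ b) ^ α = if a = b then (M : ℂ) else 0 := by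
  have hM : M ≠ 0 := by omega
  have hω0 : ω ≠ 0 := hω.ne_zero hM
  rw [← Complex.inv_eq_conj (hω.norm'_eq_one hM), inv_pow, ← div_eq_mul_inv]
  split_ifs with hab
  · simp [hab, div_self (pow_ne_zero b hω0)]
  · have hne : ω ^ a / ω ^ b ≠ 1 := fun h =>
      hab (hω.pow_inj ha hb ((div_eq_one_iff_eq (pow_ne_zero b hω0)).mp h))
    rw [geom_sum_eq hne, div_pow, ← pow_mul, ← pow_mul, mul_comm a, mul_comm b, pow_mul,
      pow_mul, hω.pow_eq_one]
    simp

namespace DSym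

variable {d N : ℕ}

lemma wsum_le (i : Idx d N) : wsum i ≤ N * (d - 1) :=
  calc wsum i ≤ ∑ _k : Fin N, (d - 1) := sum_le_sum fun k _ => Nat.le_sub_one_of_lt (i k).2
    _ = N * (d - 1) := by simp

lemma dickeDiag_apply (p : ℕ → ℝ) (i i' : Idx d N) :
    dickeDiag d N p i i' = if wsum i = wsum i' then (p (wsum i) : ℂ) else 0 := by
  simp only [dickeDiag, Matrix.sum_apply, Matrix.smul_apply, RProj, Matrix.vecMulVec_apply,
    Pi.star_apply, Rvec, smul_eq_mul]
  rw [sum_eq_single (wsum i)]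
  · by_cases h : wsum i = wsum i' <;> simp [h, eq_comm]
  · intro k _ hk
    simp [Ne.symm hk]
  · intro h
    exact absurd (mem_range.mpr (Nat.lt_succ_of_le (wsum_le i))) h

lemma prodProj_const_geom (c z : ℂ) (i i' : Idx d N) :
    prodProj (fun _ : Fin N => fun x : Fin d => c * z ^ (x : ℕ)) i i'
      = (Complex.normSq c : ℂ) ^ N * (z ^ wsum i * conj z ^ wsum i') := by
  simp only [prodProj, Matrix.of_apply, map_mul, map_pow]
  calc ∏ j, c * z ^ (i j : ℕ) * (conj c * conj z ^ (i' j : ℕ))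
      = ∏ j, c * conj c * (z ^ (i j : ℕ) * conj z ^ (i' j : ℕ)) :=
        prod_congr rfl fun _ _ => by ring
    _ = _ := by
      rw [prod_mul_distrib, prod_const, prod_mul_distrib, prod_pow_eq_pow_sum,
        prod_pow_eq_pow_sum, Complex.mul_conj, card_univ, Fintype.card_fin]
      rfl

lemma prodProj_zeta_apply (w : ℂ) (i i' : Idx d N) :
    prodProj (fun _ : Fin N => zeta d w) i i'
      = (Cz d w : ℂ) ^ (2 * N) * (w ^ wsum i * conj w ^ wsum i') := by
  rw [show zeta d w = fun x : Fin d => (Cz d w : ℂ) * w ^ (x : ℕ) from rfl, prodProj_const_geom,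
    Complex.normSq_ofReal, pow_mul, sq]
  push_cast
  rfl

lemma sum_range_norm_pow_pos (hd : 1 ≤ d) (z : ℂ) : 0 < ∑ j ∈ range d, ‖z‖ ^ (2 * j) :=
  sum_pos' (fun j _ => by positivity) ⟨0, mem_range.mpr hd, by simp⟩

lemma Cz_pos (hd : 1 ≤ d) (z : ℂ) : 0 < Cz d z :=
  Real.rpow_pos_of_pos (sum_range_norm_pow_pos hd z) _

lemma Cz_sq_mul_sum (hd : 1 ≤ d) (z : ℂ) :
    Cz d z ^ 2 * ∑ j ∈ range d, ‖z‖ ^ (2 * j) = 1 := by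
  have hS := sum_range_norm_pow_pos hd z
  rw [Cz, ← Real.rpow_natCast, ← Real.rpow_mul hS.le, ← Real.rpow_add_one hS.ne']
  norm_num

lemma Cz_mul_of_norm_eq_one {ω : ℂ} (hω : ‖ω‖ = 1) (z : ℂ) : Cz d (z * ω) = Cz d z := by
  simp [Cz, hω]

lemma sum_normSq_zeta (hd : 1 ≤ d) (z : ℂ) : ∑ x, Complex.normSq (zeta d z x) = 1 := by
  simp only [zeta, Complex.normSq_mul, Complex.normSq_ofReal, map_pow]
  rw [← mul_sum, ← sq, Fin.sum_univ_eq_sum_range (fun j => Complex.normSq z ^ j) d,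
    ← Cz_sq_mul_sum hd z]
  simp only [Complex.normSq_eq_norm_sq, pow_mul]

lemma sum_prodProj_zeta_rotate {ω : ℂ} {M : ℕ} (hω : IsPrimitiveRoot ω M)
    (hM : N * (d - 1) < M) (z : ℂ) :
    ∑ α : Fin M, prodProj (fun _ : Fin N => zeta d (z * ω ^ (α : ℕ)))
      = ((M * Cz d z ^ (2 * N) : ℝ) : ℂ) • dickeDiag d N (fun k => Complex.normSq z ^ k) := by
  have hω1 : ‖ω‖ = 1 := hω.norm'_eq_one (by omega)
  ext i i'
  have hphase : ∀ α : ℕ, (z * ω ^ α) ^ wsum i * conj (z * ω ^ α) ^ wsum i'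
      = z ^ wsum i * conj z ^ wsum i' * (ω ^ wsum i * conj ω ^ wsum i') ^ α := by
    intro α
    simp only [map_mul, map_pow, mul_pow, ← pow_mul]
    ring
  have hCz : ∀ α : ℕ, Cz d (z * ω ^ α) = Cz d z := fun α =>
    Cz_mul_of_norm_eq_one (by rw [norm_pow, hω1, one_pow]) z
  simp only [Matrix.sum_apply, Matrix.smul_apply, dickeDiag_apply, prodProj_zeta_apply, hCz,
    hphase, smul_eq_mul]
  rw [Fin.sum_univ_eq_sum_range (fun α => _ * (_ * (_ ^ α))) M, ← mul_sum, ← mul_sum,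
    hω.sum_pow_mul_conj_pow (by linarith [wsum_le i]) (by linarith [wsum_le i'])]
  split_ifs with h
  · rw [← h, ← mul_pow, Complex.mul_conj]
    push_cast
    ring
  · simp

theorem stmt14_general (d N : ℕ) (hd : 2 ≤ d) (t : ℝ) (ht : 0 < t)
    (p : ℕ → ℝ) (hp : ∀ k, p k = t ^ k) :
    FullySep (dickeDiag d N p) := by
  obtain rfl : p = fun k => t ^ k := funext hp
  set M := N * (d - 1) + 1
  set z : ℂ := (Real.sqrt t : ℂ)
  have hz : Complex.normSq z = t := by simp [z, Real.mul_self_sqrt ht.le]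
  have hω := Complex.isPrimitiveRoot_exp M (by omega)
  have hw : 0 < (M : ℝ) * Cz d z ^ (2 * N) :=
    mul_pos (by positivity) (pow_pos (Cz_pos (by omega) z) _)
  refine ⟨M, fun _ => ((M : ℝ) * Cz d z ^ (2 * N))⁻¹,
    fun α _ => zeta d (z * Complex.exp (2 * Real.pi * Complex.I / M) ^ (α : ℕ)),
    fun _ => inv_pos.mpr hw, fun _ _ => sum_normSq_zeta (by omega) _, ?_⟩
  rw [← Finset.smul_sum, sum_prodProj_zeta_rotate hω (Nat.lt_succ_self _) z, hz, smul_smul,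
    ← Complex.ofReal_mul, inv_mul_cancel₀ hw.ne', Complex.ofReal_one, one_smul]

theorem stmt14 (d N : ℕ) (hd : 2 ≤ d) (hN : 2 ≤ N) (t : ℝ) (ht : 0 < t)
    (p : ℕ → ℝ) (hp : ∀ k, p k = t ^ k) :
    FullySep (dickeDiag d N p) :=
  stmt14_general d N hd t ht p hp

end DSym
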